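/- Let S_λ be a weighted shift on a directed tree T with weights λ = {λ_v}_{v∈V°}, and let u₀, u₁ ∈ V satisfy Chi(u₀) = {u₁}. Suppose e_{u₀} ∈ D^∞(S_λ), {‖S_λ^n e_{u₀}‖²}_{n=0}^∞ is a Stieltjes moment sequence, and λ_{u₁} ≠ 0. Then e_{u₁} ∈ D^∞(S_λ) and {‖S_λ^n e_{u₁}‖²}_{n=0}^∞ is a Stieltjes moment sequence. Moreover: (i) the mapping μ ↦ ρ_μ, where ρ_μ(σ) = |λ_{u₁}|² ∫_σ (1/s) dμ(s) + (1 − |λ_{u₁}|² ∫_{[0,∞)} (1/s) dμ(s)) δ₀(σ), is a bijection from the set of representing measures μ of {‖S_λ^n e_{u₁}‖²}_{n=0}^∞ with ∫_{[0,∞)} (1/s) dμ(s) ≤ 1/|λ_{u₁}|² onto the set of all representing measures of {‖S_λ^n e_{u₀}‖²}_{n=0}^∞, with inverse ρ ↦ μ_ρ given by μ_ρ(σ) = (1/|λ_{u₁}|²) ∫_σ s dρ(s); (ii) if {‖S_λ^n e_{u₁}‖²}_{n=0}^∞ is determinate, then so are {‖S_λ^{n+1} e_{u₀}‖²}_{n=0}^∞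 and {‖S_λ^n e_{u₀}‖²}_{n=0}^∞. -/

import Mathlib

open MeasureTheory ENNReal
open scoped NNReal
noncomputable section

/-- `μ` is a representing measure of the sequence `t`. -/
def IsRepMeasure (μ : Measure ℝ≥0) (t : ℕ → ℝ) : Prop :=
  ∀ n : ℕ, Integrable (fun s : ℝ≥0 => (s : ℝ) ^ n) μ ∧ t n = ∫ s, (s : ℝ) ^ n ∂μ

/-- `t` is a Stieltjes moment sequence. -/
def IsStieltjesMoment (t : ℕ → ℝ) : Prop := ∃ μ : Measure ℝ≥0, IsRepMeasure μ t

/-- `t` is a determinate Stieltjes moment sequence. -/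
def IsDetStieltjesMoment (t : ℕ → ℝ) : Prop := ∃! μ : Measure ℝ≥0, IsRepMeasure μ t

section Operators

universe u
variable {H : Type u} [NormedAddCommGroup H] [InnerProductSpace ℂ H]

/-- The maximal domain of the composition `S ∘ T`. -/
def compDomain (S T : H →ₗ.[ℂ] H) : Submodule ℂ H where
  carrier := {x | ∃ hx : x ∈ T.domain, T ⟨x, hx⟩ ∈ S.domain}
  zero_mem' := ⟨T.domain.zero_mem, by
    have h0 : (⟨0, T.domain.zero_mem⟩ : T.domain) = 0 := rfl
    rw [h0, LinearPMap.map_zero]; exact S.domain.zero_mem⟩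
  add_mem' := by
    rintro x y ⟨hx, hx'⟩ ⟨hy, hy'⟩
    refine ⟨T.domain.add_mem hx hy, ?_⟩
    have : (⟨x + y, T.domain.add_mem hx hy⟩ : T.domain) = ⟨x, hx⟩ + ⟨y, hy⟩ := rfl
    rw [this, LinearPMap.map_add]
    exact S.domain.add_mem hx' hy'
  smul_mem' := by
    rintro c x ⟨hx, hx'⟩
    refine ⟨T.domain.smul_mem c hx, ?_⟩
    have : (⟨c • x, T.domain.smul_mem c hx⟩ : T.domain) = c • (⟨x, hx⟩ : T.domain) := rfl
    rw [this, LinearPMap.map_smul]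
    exact S.domain.smul_mem c hx'

/-- Composition `S ∘ T` of partial operators, on the maximal domain. -/
def pmapComp (S T : H →ₗ.[ℂ] H) : H →ₗ.[ℂ] H :=
  S.comp (T.domRestrict (compDomain S T)) (by
    rintro ⟨x, hx⟩
    have hxT : x ∈ T.domain := (Submodule.mem_inf.mp hx).2
    have hxD : x ∈ compDomain S T := (Submodule.mem_inf.mp hx).1
    show T ⟨x, hxT⟩ ∈ S.domain
    exact hxD.choose_spec)

/-- Powers of a partial operator: `pmapPow S n = Sⁿ` with its natural domain. -/
def pmapPow (S : H →ₗ.[ℂ] H) : ℕ → (H →ₗ.[ℂ] H)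
  | 0 => LinearMap.id.toPMap ⊤
  | n + 1 => pmapComp (pmapPow S n) S

open Classical in
/-- Total (junk-valued) application of the power `Sⁿ`. -/
def powApp (S : H →ₗ.[ℂ] H) (n : ℕ) (x : H) : H :=
  if h : x ∈ (pmapPow S n).domain then (pmapPow S n) ⟨x, h⟩ else 0

/-- The set of `C^∞`-vectors of `S`. -/
def Dinf (S : H →ₗ.[ℂ] H) : Set H := {x | ∀ n : ℕ, x ∈ (pmapPow S n).domain}

/-- `F` is a core of `S`. -/
def IsCore (S : H →ₗ.[ℂ] H) (F : Submodule ℂ H) : Prop :=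
  F ≤ S.domain ∧ (S.graph : Set (H × H)) ⊆ closure ((S.domRestrict F).graph : Set (H × H))

end Operators
section Operators
universe u
variable {H : Type u} [NormedAddCommGroup H] [InnerProductSpace ℂ H]

/-- A normal (unbounded) operator: closed, densely defined, with `D(N*) = D(N)` and
`‖N* x‖ = ‖N x‖` on the common domain. -/
def IsNormalOp [CompleteSpace H] (N : H →ₗ.[ℂ] H) : Prop :=
  Dense (N.domain : Set H) ∧ N.IsClosed ∧ N.adjoint.domain = N.domain ∧
    ∀ (x : H) (hx : x ∈ N.domain) (hx' : x ∈ N.adjoint.domain),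
      ‖N.adjoint ⟨x, hx'⟩‖ = ‖N ⟨x, hx⟩‖

/-- A subnormal operator: densely defined with a normal extension in a possibly
larger Hilbert space. -/
def IsSubnormal {H : Type u} [NormedAddCommGroup H] [InnerProductSpace ℂ H]
    (S : H →ₗ.[ℂ] H) : Prop :=
  Dense (S.domain : Set H) ∧
  ∃ (K : Type u) (_ : NormedAddCommGroup K) (_ : InnerProductSpace ℂ K) (_ : CompleteSpace K)
    (J : H →ₗᵢ[ℂ] K) (N : K →ₗ.[ℂ] K), IsNormalOp N ∧
      ∀ x : S.domain, ∃ hx : J x ∈ N.domain, N ⟨J x, hx⟩ = J (S x)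

/-- A hyponormal operator. -/
def IsHyponormal [CompleteSpace H] (S : H →ₗ.[ℂ] H) : Prop :=
  Dense (S.domain : Set H) ∧
  ∀ (x : H) (hx : x ∈ S.domain), ∃ hx' : x ∈ S.adjoint.domain,
      ‖S.adjoint ⟨x, hx'⟩‖ ≤ ‖S ⟨x, hx⟩‖

end Operators

/-- A directed tree on the vertex set `V`: a connected directed graph without circuits
in which every non-root vertex has a unique parent. -/
structure DirectedTree (V : Type*) where
  edge : V → V → Prop
  connected : ∀ u v : V, Relation.ReflTransGen (fun a b => edge a b ∨ edge b a) u v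
  no_circuits : ∀ v : V, ¬ Relation.TransGen edge v v
  parent_unique : ∀ u v w : V, edge v u → edge w u → v = w

namespace DirectedTree

variable {V : Type*}

/-- The roots: vertices with no incoming edge. -/
def isRoot (T : DirectedTree V) (v : V) : Prop := ¬ ∃ u : V, T.edge u v

/-- `V°`: the non-root vertices, i.e. vertices having a parent. -/
def nonRoot (T : DirectedTree V) (v : V) : Prop := ∃ u : V, T.edge u v

open Classical in
/-- The parent function (with junk value at roots). -/
def par (T : DirectedTree V) (v : V) : V := if h : ∃ u : V, T.edge u v then h.choose else v

/-- The set of children of a vertex. -/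
def chi (T : DirectedTree V) (u : V) : Set V := {v | T.edge u v}

/-- Iterated children `Chi^n(u)`. -/
def chiN (T : DirectedTree V) : ℕ → V → Set V
  | 0, u => {u}
  | n + 1, u => ⋃ w ∈ T.chiN n u, T.chi w

/-- The descendants of `u`. -/
def des (T : DirectedTree V) (u : V) : Set V := ⋃ n : ℕ, T.chiN n u

/-- `T` is leafless: every vertex has a child. -/
def Leafless (T : DirectedTree V) : Prop := ∀ u : V, ∃ v : V, T.edge u v

/-- The product `λ_{u∣v} = ∏_{j=0}^{n-1} λ_{par^j(v)}` of the weights along the path of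
length `n` ending at `v` (for `v ∈ Chi^n(u)` this is the usual `λ_{u∣v}`). -/
def pathProd (T : DirectedTree V) (lam : V → ℂ) (n : ℕ) (v : V) : ℂ :=
  ∏ j ∈ Finset.range n, lam (T.par^[j] v)

open Classical in
/-- The formal weighted-shift transformation `Λ_T` on families of complex numbers. -/
def lamMap (T : DirectedTree V) (lam : V → ℂ) (f : V → ℂ) : V → ℂ :=
  fun v => if T.nonRoot v then lam v * f (T.par v) else 0

variable (T : DirectedTree V)

theorem lamMap_add (lam : V → ℂ) (f g : V → ℂ) :
    T.lamMap lam (f + g) = T.lamMap lam f + T.lamMap lam g := by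
  funext v; simp only [lamMap, Pi.add_apply]; split <;> ring

theorem lamMap_smul (lam : V → ℂ) (c : ℂ) (f : V → ℂ) :
    T.lamMap lam (c • f) = c • T.lamMap lam f := by
  funext v; simp only [lamMap, Pi.smul_apply, smul_eq_mul]; split <;> ring

theorem lamMap_zero (lam : V → ℂ) : T.lamMap lam (0 : V → ℂ) = 0 := by
  funext v; simp [lamMap]

/-- The domain of the weighted shift `S_λ`. -/
def shiftDomain (lam : V → ℂ) : Submodule ℂ (lp (fun _ : V => ℂ) 2) where
  carrier := {f | Memℓp (T.lamMap lam f) 2}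
  zero_mem' := by
    rw [Set.mem_setOf_eq, lp.coeFn_zero, lamMap_zero]
    exact zero_memℓp
  add_mem' := by
    intro f g hf hg
    rw [Set.mem_setOf_eq, lp.coeFn_add, lamMap_add]
    exact hf.add hg
  smul_mem' := by
    intro c f hf
    rw [Set.mem_setOf_eq, lp.coeFn_smul, lamMap_smul]
    exact hf.const_smul c

/-- The weighted shift `S_λ` on the directed tree `T`, as a partial operator in `ℓ²(V)`. -/
def shift (lam : V → ℂ) : lp (fun _ : V => ℂ) 2 →ₗ.[ℂ] lp (fun _ : V => ℂ) 2 where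
  domain := T.shiftDomain lam
  toFun :=
    { toFun := fun f => (⟨T.lamMap lam f, f.2⟩ : lp (fun _ : V => ℂ) 2)
      map_add' := by
        rintro f g
        apply lp.ext
        rw [lp.coeFn_add]
        show T.lamMap lam
            ((((f : lp (fun _ : V => ℂ) 2) : V → ℂ)) + (((g : lp (fun _ : V => ℂ) 2) : V → ℂ)))
          = T.lamMap lam ((f : lp (fun _ : V => ℂ) 2) : V → ℂ)
            + T.lamMap lam ((g : lp (fun _ : V => ℂ) 2) : V → ℂ)
        exact T.lamMap_add lam _ _
      map_smul' := by
        rintro c f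
        apply lp.ext
        rw [lp.coeFn_smul]
        show T.lamMap lam (c • (((f : lp (fun _ : V => ℂ) 2) : V → ℂ)))
          = c • T.lamMap lam ((f : lp (fun _ : V => ℂ) 2) : V → ℂ)
        exact T.lamMap_smul lam c _ }

end DirectedTree

open Classical in
/-- The basis vector `e_u` of `ℓ²(V)`. -/
def eVec {V : Type*} (u : V) : lp (fun _ : V => ℂ) 2 := lp.single 2 u 1

section MoreDefs
universe u
variable {H : Type u} [NormedAddCommGroup H] [InnerProductSpace ℂ H]

/-- The inner product, linear in the FIRST argument (the paper's convention). -/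
def innerPaper (x y : H) : ℂ := inner ℂ y x

/-- The moment sequence `n ↦ ‖Sⁿ f‖²` generated by the vector `f`. -/
def momentSeq (S : H →ₗ.[ℂ] H) (f : H) : ℕ → ℝ := fun n => ‖powApp S n f‖ ^ 2

/-- `f` is a quasi-analytic vector of `S` : `f ∈ D^∞(S)` and
`∑ₙ ‖Sⁿ f‖^{-1/n} = ∞` (with `1/0 = ∞`). -/
def IsQuasiAnalyticVec (S : H →ₗ.[ℂ] H) (f : H) : Prop :=
  (∀ n : ℕ, f ∈ (pmapPow S n).domain) ∧
  ∑' n : ℕ, ((‖powApp S (n + 1) f‖₊ ^ ((1 : ℝ) / (n + 1)) : ℝ≥0) : ℝ≥0∞)⁻¹ = ∞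

end MoreDefs

/-- The consistency condition `μ_u(σ) = ∑_{v ∈ Chi(u)} |λ_v|² ∫_σ (1/s) dμ_v(s) + ε_u δ₀(σ)`
at the vertex `u` (with the convention `1/0 = ∞`). -/
def consistentAt {V : Type*} (T : DirectedTree V) (lam : V → ℂ) (μ : V → MeasureTheory.Measure ℝ≥0)
    (ε : V → ℝ≥0) (u : V) : Prop :=
  ∀ σ : Set ℝ≥0, MeasurableSet σ →
    μ u σ = (∑' v : {v : V // T.edge u v},
        (‖lam (v : V)‖₊ : ℝ≥0∞) ^ 2 * ∫⁻ s in σ, ((s : ℝ≥0∞))⁻¹ ∂(μ (v : V)))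
      + (ε u : ℝ≥0∞) * MeasureTheory.Measure.dirac (0 : ℝ≥0) σ

/-- The sequence `{ϑ, t₀, t₁, t₂, …}` obtained by prepending `ϑ` to `t`. -/
def shiftedSeq (ϑ : ℝ) (t : ℕ → ℝ) : ℕ → ℝ := fun n => match n with
  | 0 => ϑ
  | n + 1 => t n

/-- A positive definite sequence of real numbers. -/
def IsPosDefSeq (t : ℕ → ℝ) : Prop :=
  ∀ (n : ℕ) (α : ℕ → ℂ),
    0 ≤ (∑ k ∈ Finset.range (n + 1), ∑ l ∈ Finset.range (n + 1),
        (t (k + l) : ℂ) * α k * (starRingEnd ℂ) (α l)).re ∧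
    (∑ k ∈ Finset.range (n + 1), ∑ l ∈ Finset.range (n + 1),
        (t (k + l) : ℂ) * α k * (starRingEnd ℂ) (α l)).im = 0


/-- The map `μ ↦ ρ_μ` of Lemma (charsub-1), with `c = |λ_{u₁}|²`. -/
def rhoMap (c : ℝ≥0∞) (μ : Measure ℝ≥0) : Measure ℝ≥0 :=
  c • μ.withDensity (fun s => ((s : ℝ≥0∞))⁻¹)
    + (1 - c * ∫⁻ s, ((s : ℝ≥0∞))⁻¹ ∂μ) • Measure.dirac (0 : ℝ≥0)

/-- The map `ρ ↦ μ_ρ` of Lemma (charsub-1), with `c = |λ_{u₁}|²`. -/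
def muOfRho (c : ℝ≥0∞) (ρ : Measure ℝ≥0) : Measure ℝ≥0 :=
  c⁻¹ • ρ.withDensity fun s => (s : ℝ≥0∞)

/-!
Since `Chi(u₀) = {u₁}`, `S_λ e_{u₀} = λ_{u₁} e_{u₁}`, so `e_{u₁} ∈ D^∞(S_λ)` and
`‖S_λ^{n+1} e_{u₀}‖² = c ‖S_λ^n e_{u₁}‖²` with `c = |λ_{u₁}|²`. The moments of `ρ` from index one
on are the moments of `s dρ(s)`, so `μ_ρ = c⁻¹ s dρ(s)` represents the sequence of `e_{u₁}`.
Conversely `c s⁻¹ dμ(s)` has the right moments from index one on, and the condition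
`∫ s⁻¹ dμ ≤ 1/c` is exactly what lets an atom at `0` restore total mass `‖e_{u₀}‖² = 1`; it also
forces `μ{0} = 0`. The two maps are mutually inverse because multiplying densities by `s` and `s⁻¹`
only kills the atom at `0`, which is then determined by the total mass. Determinacy of the
sequence of `e_{u₁}` passes to `n ↦ ‖S_λ^{n+1} e_{u₀}‖²` by scaling, and to the sequence of `e_{u₀}`
because `ρ ↦ μ_ρ` is injective on representing measures.
-/

section WithDensity

lemma measure_singleton_zero_eq_zero_of_lintegral_inv_ne_top {μ : Measure ℝ≥0}
    (h : ∫⁻ s, (s : ℝ≥0∞)⁻¹ ∂μ ≠ ⊤) : μ {0} = 0 := by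
  by_contra h0
  refine h (eq_top_iff.mpr ?_)
  calc (⊤ : ℝ≥0∞) = ∫⁻ s in {0}, (s : ℝ≥0∞)⁻¹ ∂μ := by
        rw [lintegral_singleton, coe_zero, inv_zero, top_mul h0]
    _ ≤ ∫⁻ s, (s : ℝ≥0∞)⁻¹ ∂μ := setLIntegral_le_lintegral _ _

lemma coe_mul_inv_eq_indicator :
    (fun s : ℝ≥0 => (s : ℝ≥0∞)) * (fun s : ℝ≥0 => (s : ℝ≥0∞)⁻¹) = ({0}ᶜ : Set ℝ≥0).indicator 1 := by
  funext s
  by_cases hs : s = 0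
  · simp [hs]
  · simp [hs, ENNReal.mul_inv_cancel]

lemma withDensity_coe_withDensity_inv (ρ : Measure ℝ≥0) :
    (ρ.withDensity fun s => (s : ℝ≥0∞)).withDensity (fun s => (s : ℝ≥0∞)⁻¹)
      = ρ.restrict {0}ᶜ := by
  rw [← withDensity_mul ρ (f := fun s => (s : ℝ≥0∞)) (g := fun s => (s : ℝ≥0∞)⁻¹)
    measurable_coe_nnreal_ennreal measurable_coe_nnreal_ennreal.inv,
    coe_mul_inv_eq_indicator, withDensity_indicator_one (measurableSet_singleton 0).compl]

lemma withDensity_inv_withDensity_coe {μ : Measure ℝ≥0} (hμ : μ {0} = 0) :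
    (μ.withDensity fun s => (s : ℝ≥0∞)⁻¹).withDensity (fun s => (s : ℝ≥0∞)) = μ := by
  rw [← withDensity_mul μ (f := fun s => (s : ℝ≥0∞)⁻¹) (g := fun s => (s : ℝ≥0∞))
    measurable_coe_nnreal_ennreal.inv measurable_coe_nnreal_ennreal,
    mul_comm, coe_mul_inv_eq_indicator, withDensity_indicator_one (measurableSet_singleton 0).compl]
  exact Measure.restrict_eq_self_of_ae_mem (compl_mem_ae_iff.mpr hμ)

lemma lintegral_inv_withDensity_coe (ρ : Measure ℝ≥0) :
    ∫⁻ s, (s : ℝ≥0∞)⁻¹ ∂(ρ.withDensity fun s => (s : ℝ≥0∞)) = ρ {0}ᶜ := by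
  rw [lintegral_withDensity_eq_lintegral_mul ρ (f := fun s => (s : ℝ≥0∞))
    (g := fun s => (s : ℝ≥0∞)⁻¹) measurable_coe_nnreal_ennreal
    measurable_coe_nnreal_ennreal.inv, coe_mul_inv_eq_indicator,
    lintegral_indicator_one (measurableSet_singleton 0).compl]

lemma smul_pow_eq_pow_succ (n : ℕ) :
    (fun s : ℝ≥0 => s • (s : ℝ) ^ n) = fun s : ℝ≥0 => (s : ℝ) ^ (n + 1) := by
  funext s
  rw [NNReal.smul_def, smul_eq_mul, pow_succ']

lemma integrable_pow_withDensity_coe_iff {ρ : Measure ℝ≥0} (n : ℕ) :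
    Integrable (fun s : ℝ≥0 => (s : ℝ) ^ n) (ρ.withDensity fun s => (s : ℝ≥0∞))
      ↔ Integrable (fun s : ℝ≥0 => (s : ℝ) ^ (n + 1)) ρ := by
  rw [← smul_pow_eq_pow_succ]
  exact integrable_withDensity_iff_integrable_smul (f := fun s => s) measurable_id

lemma integral_pow_withDensity_coe (ρ : Measure ℝ≥0) (n : ℕ) :
    ∫ s, (s : ℝ) ^ n ∂(ρ.withDensity fun s => (s : ℝ≥0∞)) = ∫ s, (s : ℝ) ^ (n + 1) ∂ρ := by
  rw [← smul_pow_eq_pow_succ]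
  exact integral_withDensity_eq_integral_smul (f := fun s => s) measurable_id _

end WithDensity

namespace IsRepMeasure

lemma measure_univ {ρ : Measure ℝ≥0} {t : ℕ → ℝ} (h : IsRepMeasure ρ t) :
    ρ Set.univ = ENNReal.ofReal (t 0) := by
  obtain ⟨hint, hval⟩ := h 0
  simp only [pow_zero] at hint hval
  have : IsFiniteMeasure ρ := (integrable_const_iff_isFiniteMeasure one_ne_zero).mp hint
  rw [hval, integral_const, smul_eq_mul, mul_one, ofReal_measureReal]

lemma smul_measure {ν : Measure ℝ≥0} {t : ℕ → ℝ} (h : IsRepMeasure ν t) {a : ℝ≥0∞} (ha : a ≠ ⊤) :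
    IsRepMeasure (a • ν) (fun n => a.toReal * t n) := fun n =>
  ⟨(h n).1.smul_measure ha, by rw [integral_smul_measure, ← (h n).2, smul_eq_mul]⟩

lemma withDensity_coe {ρ : Measure ℝ≥0} {t : ℕ → ℝ} (h : IsRepMeasure ρ t) :
    IsRepMeasure (ρ.withDensity fun s => (s : ℝ≥0∞)) (fun n => t (n + 1)) := fun n =>
  ⟨(integrable_pow_withDensity_coe_iff n).mpr (h (n + 1)).1,
    by rw [integral_pow_withDensity_coe]; exact (h (n + 1)).2⟩

end IsRepMeasure

lemma IsDetStieltjesMoment.const_mul {t : ℕ → ℝ} (h : IsDetStieltjesMoment t) {a : ℝ≥0∞}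
    (ha₀ : a ≠ 0) (ha : a ≠ ⊤) : IsDetStieltjesMoment (fun n => a.toReal * t n) := by
  obtain ⟨μ, hμ, huniq⟩ := h
  refine ⟨a • μ, hμ.smul_measure ha, fun ν hν => ?_⟩
  have hν' : IsRepMeasure (a⁻¹ • ν) t := by
    convert hν.smul_measure (inv_ne_top.mpr ha₀) using 2 with n
    rw [toReal_inv, inv_mul_cancel_left₀ (toReal_ne_zero.mpr ⟨ha₀, ha⟩)]
  rw [← huniq _ hν', smul_smul, ENNReal.mul_inv_cancel ha₀ ha, one_smul]

section RhoMap

variable {c : ℝ≥0∞}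

lemma lintegral_inv_muOfRho (ρ : Measure ℝ≥0) :
    ∫⁻ s, (s : ℝ≥0∞)⁻¹ ∂(muOfRho c ρ) = c⁻¹ * ρ {0}ᶜ := by
  rw [muOfRho, lintegral_smul_measure, lintegral_inv_withDensity_coe, smul_eq_mul]

lemma lintegral_inv_muOfRho_le {ρ : Measure ℝ≥0} (hρ : ρ Set.univ ≤ 1) :
    ∫⁻ s, (s : ℝ≥0∞)⁻¹ ∂(muOfRho c ρ) ≤ c⁻¹ := by
  rw [lintegral_inv_muOfRho]
  calc c⁻¹ * ρ {0}ᶜ ≤ c⁻¹ * 1 := by gcongr; exact (measure_mono (Set.subset_univ _)).trans hρ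
    _ = c⁻¹ := mul_one _

lemma rhoMap_muOfRho (hc₀ : c ≠ 0) (hc : c ≠ ⊤) {ρ : Measure ℝ≥0} (hρ : ρ Set.univ = 1) :
    rhoMap c (muOfRho c ρ) = ρ := by
  have hatom : 1 - ρ {0}ᶜ = ρ {0} := by
    rw [← hρ, ← measure_add_measure_compl (measurableSet_singleton (0 : ℝ≥0))]
    exact ENNReal.add_sub_cancel_right
      (measure_ne_top_of_subset (Set.subset_univ _) (hρ ▸ one_ne_top))
  rw [rhoMap, lintegral_inv_muOfRho, ← mul_assoc, ENNReal.mul_inv_cancel hc₀ hc, one_mul, hatom,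
    muOfRho, withDensity_smul_measure, withDensity_coe_withDensity_inv, smul_smul,
    ENNReal.mul_inv_cancel hc₀ hc, one_smul, ← Measure.restrict_singleton, add_comm,
    Measure.restrict_add_restrict_compl (measurableSet_singleton 0)]

lemma muOfRho_rhoMap (hc₀ : c ≠ 0) (hc : c ≠ ⊤) {μ : Measure ℝ≥0} (hμ : μ {0} = 0) :
    muOfRho c (rhoMap c μ) = μ := by
  have hdirac : (Measure.dirac (0 : ℝ≥0)).withDensity (fun s => (s : ℝ≥0∞)) = 0 := by
    rw [dirac_withDensity, coe_zero, zero_smul]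
  rw [muOfRho, rhoMap, withDensity_add_measure, withDensity_smul_measure, withDensity_smul_measure,
    withDensity_inv_withDensity_coe hμ, hdirac, smul_zero, add_zero, smul_smul,
    ENNReal.inv_mul_cancel hc₀ hc, one_smul]

variable {t₀ t₁ : ℕ → ℝ}

lemma isRepMeasure_muOfRho (hc₀ : c ≠ 0) (hc : c ≠ ⊤) (hrel : ∀ n, t₀ (n + 1) = c.toReal * t₁ n)
    {ρ : Measure ℝ≥0} (hρ : IsRepMeasure ρ t₀) : IsRepMeasure (muOfRho c ρ) t₁ := by
  show IsRepMeasure (c⁻¹ • ρ.withDensity fun s => (s : ℝ≥0∞)) t₁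
  convert hρ.withDensity_coe.smul_measure (inv_ne_top.mpr hc₀) using 1
  funext n
  rw [hrel, toReal_inv, inv_mul_cancel_left₀ (toReal_ne_zero.mpr ⟨hc₀, hc⟩)]

lemma rhoMap_apply_univ {μ : Measure ℝ≥0} (hμ : c * ∫⁻ s, (s : ℝ≥0∞)⁻¹ ∂μ ≤ 1) :
    rhoMap c μ Set.univ = 1 := by
  rw [rhoMap, Measure.add_apply, Measure.smul_apply, Measure.smul_apply,
    withDensity_apply _ MeasurableSet.univ, setLIntegral_univ, measure_univ, smul_eq_mul,
    smul_eq_mul, mul_one, add_tsub_cancel_of_le hμ]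

lemma isRepMeasure_rhoMap (hc₀ : c ≠ 0) (hc : c ≠ ⊤) (ht₀ : t₀ 0 = 1)
    (hrel : ∀ n, t₀ (n + 1) = c.toReal * t₁ n) {μ : Measure ℝ≥0} (hμ : IsRepMeasure μ t₁)
    (hI : ∫⁻ s, (s : ℝ≥0∞)⁻¹ ∂μ ≤ c⁻¹) : IsRepMeasure (rhoMap c μ) t₀ := by
  have hmass : c * ∫⁻ s, (s : ℝ≥0∞)⁻¹ ∂μ ≤ 1 :=
    (mul_le_mul_right hI c).trans (ENNReal.mul_inv_cancel hc₀ hc).le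
  have hμ₀ : (μ.withDensity fun s => (s : ℝ≥0∞)⁻¹).withDensity (fun s => (s : ℝ≥0∞)) = μ :=
    withDensity_inv_withDensity_coe <| measure_singleton_zero_eq_zero_of_lintegral_inv_ne_top <|
      ne_top_of_le_ne_top (inv_ne_top.mpr hc₀) hI
  rintro (_ | n)
  · have : IsProbabilityMeasure (rhoMap c μ) := ⟨rhoMap_apply_univ hmass⟩
    simp [ht₀]
  · have hintν : Integrable (fun s : ℝ≥0 => (s : ℝ) ^ (n + 1))
        (μ.withDensity fun s => (s : ℝ≥0∞)⁻¹) :=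
      (integrable_pow_withDensity_coe_iff n).mp (by rw [hμ₀]; exact (hμ n).1)
    have hintδ : Integrable (fun s : ℝ≥0 => (s : ℝ) ^ (n + 1)) (Measure.dirac 0) :=
      integrable_dirac enorm_lt_top
    have hatom : 1 - c * ∫⁻ s, (s : ℝ≥0∞)⁻¹ ∂μ ≠ ⊤ := ne_top_of_le_ne_top one_ne_top tsub_le_self
    refine ⟨(hintν.smul_measure hc).add_measure (hintδ.smul_measure hatom), ?_⟩
    rw [rhoMap, integral_add_measure (hintν.smul_measure hc) (hintδ.smul_measure hatom),
      integral_smul_measure, integral_smul_measure, integral_dirac, ← integral_pow_withDensity_coe,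
      hμ₀, ← (hμ n).2, hrel]
    simp

lemma isDetStieltjesMoment_of_tail (hc₀ : c ≠ 0) (hc : c ≠ ⊤) (ht₀ : t₀ 0 = 1)
    (hrel : ∀ n, t₀ (n + 1) = c.toReal * t₁ n) (hst : IsStieltjesMoment t₀)
    (hdet : IsDetStieltjesMoment t₁) : IsDetStieltjesMoment t₀ := by
  obtain ⟨ρ, hρ⟩ := hst
  have hprob {ρ' : Measure ℝ≥0} (h : IsRepMeasure ρ' t₀) : ρ' Set.univ = 1 := by
    rw [h.measure_univ, ht₀, ofReal_one]
  refine ⟨ρ, hρ, fun ρ' hρ' => ?_⟩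
  rw [← rhoMap_muOfRho hc₀ hc (hprob hρ'), ← rhoMap_muOfRho hc₀ hc (hprob hρ),
    hdet.unique (isRepMeasure_muOfRho hc₀ hc hrel hρ') (isRepMeasure_muOfRho hc₀ hc hrel hρ)]

end RhoMap

section PartialPowers

universe u
variable {H : Type u} [NormedAddCommGroup H] [InnerProductSpace ℂ H] {S : H →ₗ.[ℂ] H}

lemma mem_pmapPow_succ_iff {n : ℕ} {x : H} :
    x ∈ (pmapPow S (n + 1)).domain ↔ ∃ hx : x ∈ S.domain, S ⟨x, hx⟩ ∈ (pmapPow S n).domain :=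
  ⟨fun h => (Submodule.mem_inf.mp h).1, fun h => Submodule.mem_inf.mpr ⟨h, h.1⟩⟩

lemma powApp_zero (x : H) : powApp S 0 x = x := by
  have h : x ∈ (pmapPow S 0).domain := Submodule.mem_top
  rw [powApp, dif_pos h]
  rfl

lemma powApp_succ {n : ℕ} {x : H} (hx : x ∈ S.domain) (h : S ⟨x, hx⟩ ∈ (pmapPow S n).domain) :
    powApp S (n + 1) x = powApp S n (S ⟨x, hx⟩) := by
  rw [powApp, dif_pos (mem_pmapPow_succ_iff.mpr ⟨hx, h⟩), powApp, dif_pos h]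
  rfl

lemma powApp_smul {n : ℕ} {x : H} (h : x ∈ (pmapPow S n).domain) (a : ℂ) :
    powApp S n (a • x) = a • powApp S n x := by
  rw [powApp, dif_pos ((pmapPow S n).domain.smul_mem a h), powApp, dif_pos h,
    ← LinearPMap.map_smul]
  rfl

end PartialPowers

lemma eVec_apply_self {V : Type*} (u : V) : (eVec u : V → ℂ) u = 1 := by
  classical exact lp.single_apply_self 2 u 1

lemma eVec_apply_of_ne {V : Type*} {u v : V} (h : v ≠ u) : (eVec u : V → ℂ) v = 0 := by
  classical exact lp.single_apply_ne 2 u 1 h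

namespace DirectedTree

variable {V : Type*} (T : DirectedTree V) (lam : V → ℂ) {u₀ u₁ : V}

lemma edge_par {v : V} (hv : T.nonRoot v) : T.edge (T.par v) v := by
  have hv' : ∃ u, T.edge u v := hv
  rw [par, dif_pos hv']
  exact hv'.choose_spec

lemma par_eq_of_edge {u v : V} (h : T.edge u v) : T.par v = u :=
  T.parent_unique v _ u (T.edge_par ⟨u, h⟩) h

lemma lamMap_eVec_of_chi_eq_singleton (hchi : T.chi u₀ = {u₁}) :
    T.lamMap lam (eVec u₀ : V → ℂ) = ((lam u₁ • eVec u₁ : lp (fun _ : V => ℂ) 2) : V → ℂ) := by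
  have hedge : T.edge u₀ u₁ := show u₁ ∈ T.chi u₀ by rw [hchi]; rfl
  funext v
  rw [lp.coeFn_smul, Pi.smul_apply, lamMap]
  by_cases hv : v = u₁
  · subst hv
    rw [if_pos ⟨u₀, hedge⟩, T.par_eq_of_edge hedge, eVec_apply_self, eVec_apply_self, smul_eq_mul]
  · rw [eVec_apply_of_ne hv, smul_zero]
    split_ifs with hnr
    · have hpar : T.par v ≠ u₀ := fun h => by
        have hchild : v ∈ T.chi u₀ := h ▸ T.edge_par hnr
        rw [hchi] at hchild
        exact hv hchild
      rw [eVec_apply_of_ne hpar, mul_zero]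
    · rfl

lemma shift_eVec_of_chi_eq_singleton (hchi : T.chi u₀ = {u₁})
    (hx : eVec u₀ ∈ (T.shift lam).domain) : T.shift lam ⟨eVec u₀, hx⟩ = lam u₁ • eVec u₁ :=
  lp.ext (T.lamMap_eVec_of_chi_eq_singleton lam hchi)

lemma eVec_mem_pmapPow_of_chi_eq_singleton (hchi : T.chi u₀ = {u₁}) (hnz : lam u₁ ≠ 0) {n : ℕ}
    (h : eVec u₀ ∈ (pmapPow (T.shift lam) (n + 1)).domain) :
    eVec u₁ ∈ (pmapPow (T.shift lam) n).domain := by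
  obtain ⟨hx, hS⟩ := mem_pmapPow_succ_iff.mp h
  rw [T.shift_eVec_of_chi_eq_singleton lam hchi hx] at hS
  simpa [hnz] using Submodule.smul_mem _ (lam u₁)⁻¹ hS

lemma powApp_succ_eVec_of_chi_eq_singleton (hchi : T.chi u₀ = {u₁}) (hnz : lam u₁ ≠ 0) {n : ℕ}
    (h : eVec u₀ ∈ (pmapPow (T.shift lam) (n + 1)).domain) :
    powApp (T.shift lam) (n + 1) (eVec u₀) = lam u₁ • powApp (T.shift lam) n (eVec u₁) := by
  obtain ⟨hx, hS⟩ := mem_pmapPow_succ_iff.mp h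
  rw [powApp_succ hx hS, T.shift_eVec_of_chi_eq_singleton lam hchi hx,
    powApp_smul (T.eVec_mem_pmapPow_of_chi_eq_singleton lam hchi hnz h)]

lemma momentSeq_succ_eVec_of_chi_eq_singleton (hchi : T.chi u₀ = {u₁}) (hnz : lam u₁ ≠ 0)
    {n : ℕ} (h : eVec u₀ ∈ (pmapPow (T.shift lam) (n + 1)).domain) :
    momentSeq (T.shift lam) (eVec u₀) (n + 1)
      = ‖lam u₁‖ ^ 2 * momentSeq (T.shift lam) (eVec u₁) n := by
  rw [momentSeq, momentSeq, T.powApp_succ_eVec_of_chi_eq_singleton lam hchi hnz h, norm_smul,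
    mul_pow]

end DirectedTree

lemma momentSeq_eVec_zero {V : Type*} (S : lp (fun _ : V => ℂ) 2 →ₗ.[ℂ] lp (fun _ : V => ℂ) 2)
    (u : V) : momentSeq S (eVec u) 0 = 1 := by
  classical
  rw [momentSeq, powApp_zero, eVec, lp.norm_single two_pos, norm_one, one_pow]

/-- hereditary property of Stieltjes moment sequences for a parent with
exactly one child, together with the bijection between representing measures and the
determinacy assertions. -/
theorem stmt11 {V : Type*} (T : DirectedTree V) (lam : V → ℂ) (u₀ u₁ : V)
    (hchi : T.chi u₀ = {u₁})
    (h0 : ∀ n : ℕ, eVec u₀ ∈ (pmapPow (T.shift lam) n).domain)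
    (hst : IsStieltjesMoment (momentSeq (T.shift lam) (eVec u₀)))
    (hnz : lam u₁ ≠ 0) :
    (∀ n : ℕ, eVec u₁ ∈ (pmapPow (T.shift lam) n).domain)
    ∧ IsStieltjesMoment (momentSeq (T.shift lam) (eVec u₁))
    ∧ (∀ μ : Measure ℝ≥0, IsRepMeasure μ (momentSeq (T.shift lam) (eVec u₁)) →
        (∫⁻ s, ((s : ℝ≥0∞))⁻¹ ∂μ) ≤ ((‖lam u₁‖₊ : ℝ≥0∞) ^ 2)⁻¹ →
        IsRepMeasure (rhoMap ((‖lam u₁‖₊ : ℝ≥0∞) ^ 2) μ) (momentSeq (T.shift lam) (eVec u₀))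
        ∧ muOfRho ((‖lam u₁‖₊ : ℝ≥0∞) ^ 2) (rhoMap ((‖lam u₁‖₊ : ℝ≥0∞) ^ 2) μ) = μ)
    ∧ (∀ ρ : Measure ℝ≥0, IsRepMeasure ρ (momentSeq (T.shift lam) (eVec u₀)) →
        IsRepMeasure (muOfRho ((‖lam u₁‖₊ : ℝ≥0∞) ^ 2) ρ) (momentSeq (T.shift lam) (eVec u₁))
        ∧ (∫⁻ s, ((s : ℝ≥0∞))⁻¹ ∂(muOfRho ((‖lam u₁‖₊ : ℝ≥0∞) ^ 2) ρ))
            ≤ ((‖lam u₁‖₊ : ℝ≥0∞) ^ 2)⁻¹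
        ∧ rhoMap ((‖lam u₁‖₊ : ℝ≥0∞) ^ 2) (muOfRho ((‖lam u₁‖₊ : ℝ≥0∞) ^ 2) ρ) = ρ)
    ∧ (IsDetStieltjesMoment (momentSeq (T.shift lam) (eVec u₁)) →
        IsDetStieltjesMoment (fun n => momentSeq (T.shift lam) (eVec u₀) (n + 1))
        ∧ IsDetStieltjesMoment (momentSeq (T.shift lam) (eVec u₀))) := by
  set c : ℝ≥0∞ := (‖lam u₁‖₊ : ℝ≥0∞) ^ 2
  have hc₀ : c ≠ 0 := pow_ne_zero 2 (coe_ne_zero.mpr (nnnorm_ne_zero_iff.mpr hnz))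
  have hc : c ≠ ⊤ := pow_ne_top coe_ne_top
  have ht₀ := momentSeq_eVec_zero (T.shift lam) u₀
  have hrel (n : ℕ) : momentSeq (T.shift lam) (eVec u₀) (n + 1)
      = c.toReal * momentSeq (T.shift lam) (eVec u₁) n := by
    rw [T.momentSeq_succ_eVec_of_chi_eq_singleton lam hchi hnz (h0 (n + 1))]
    simp [c]
  have hprob {ρ : Measure ℝ≥0} (hρ : IsRepMeasure ρ (momentSeq (T.shift lam) (eVec u₀))) :
      ρ Set.univ = 1 := by
    rw [hρ.measure_univ, ht₀, ofReal_one]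
  have hnull {μ : Measure ℝ≥0} (hI : ∫⁻ s, (s : ℝ≥0∞)⁻¹ ∂μ ≤ c⁻¹) : μ {0} = 0 :=
    measure_singleton_zero_eq_zero_of_lintegral_inv_ne_top <|
      ne_top_of_le_ne_top (inv_ne_top.mpr hc₀) hI
  refine ⟨fun n => T.eVec_mem_pmapPow_of_chi_eq_singleton lam hchi hnz (h0 (n + 1)), ?_,
    fun μ hμ hI => ⟨isRepMeasure_rhoMap hc₀ hc ht₀ hrel hμ hI, muOfRho_rhoMap hc₀ hc (hnull hI)⟩,
    fun ρ hρ => ⟨isRepMeasure_muOfRho hc₀ hc hrel hρ, lintegral_inv_muOfRho_le (hprob hρ).le,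
      rhoMap_muOfRho hc₀ hc (hprob hρ)⟩,
    fun hdet => ⟨?_, isDetStieltjesMoment_of_tail hc₀ hc ht₀ hrel hst hdet⟩⟩
  · obtain ⟨ρ, hρ⟩ := hst
    exact ⟨muOfRho c ρ, isRepMeasure_muOfRho hc₀ hc hrel hρ⟩
  · simpa only [hrel] using hdet.const_mul hc₀ hc
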